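/- For all integers m ≥ 0 and i ≥ 0, the rational function h_m(v) is regular at v = 0 and its i-th Taylor coefficient at v = 0 equals (i!)² times the coefficient of u^m in the polynomial p_i(u). Equivalently, the double series identity ∑_{n≥0} (n!)² p_n(u) v^n = ∑_{m≥0} h_m(v) u^m holds coefficientwise. -/

import Mathlib

open Polynomial

/-- Derivative of a rational function. -/
noncomputable def ratDeriv (f : RatFunc ℚ) : RatFunc ℚ :=
  RatFunc.mk (Polynomial.derivative f.num * f.denom - f.num * Polynomial.derivative f.denom)
    (f.denom ^ 2)

/-!
Multiplying the recursion for `hₙ` by `v` gives `(1 - n v) hₙ = v · T_{n-1} hₙ₋₁` with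
`T_c = θ - c - ¼ θ² v` and `θ = v d/dv`. Since `1 - n v` is invertible among Laurent series, this
determines `hₙ` from `hₙ₋₁`. The coefficient of `u^m` in `∑ₙ (n!)² pₙ(u) vⁿ` is a power series
satisfying the same relation (comparing coefficients of `v^{i+1}` is the recursion for `p_i`,
scaled by `(i!)²`), so induction on `m` identifies the two.
-/

open scoped PowerSeries LaurentSeries

theorem Polynomial.coeff_X_mul_derivative {R : Type*} [CommSemiring R] (p : R[X]) (n : ℕ) :
    (X * derivative p).coeff n = n * p.coeff n := by
  cases n with
  | zero => simp
  | succ n => rw [coeff_X_mul, coeff_derivative, mul_comm]; push_cast; rfl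

theorem PowerSeries.coeff_X_mul_derivative {R : Type*} [CommSemiring R] (φ : R⟦X⟧) (n : ℕ) :
    coeff n (X * d⁄dX R φ) = n * coeff n φ := by
  cases n with
  | zero => simp
  | succ n => rw [coeff_succ_X_mul, coeff_derivative, mul_comm]; push_cast; rfl

theorem coe_algebraMap_polynomial {F : Type*} [Field F] (P : F[X]) :
    ((algebraMap F[X] (RatFunc F) P : RatFunc F) : F⸨X⸩) = ((P : F⟦X⟧) : F⸨X⸩) :=
  (RatFunc.coe_coe P).symm

theorem coe_polynomial_ne_zero {F : Type*} [Field F] {P : F[X]} (hP : P ≠ 0) :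
    ((P : F⟦X⟧) : F⸨X⸩) ≠ 0 :=
  (map_ne_zero_iff _ HahnSeries.ofPowerSeries_injective).mpr (Polynomial.coe_eq_zero_iff.not.mpr hP)

theorem coe_ratDeriv {f : RatFunc ℚ} {φ : ℚ⟦X⟧} (hf : (f : ℚ⸨X⸩) = φ) :
    (ratDeriv f : ℚ⸨X⸩) = (d⁄dX ℚ φ : ℚ⸨X⸩) := by
  have hnum : (f.num : ℚ⟦X⟧) = φ * f.denom := by
    apply HahnSeries.ofPowerSeries_injective (Γ := ℤ)
    rw [← RatFunc.num_div_denom f, map_div₀, coe_algebraMap_polynomial,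
      coe_algebraMap_polynomial, div_eq_iff (coe_polynomial_ne_zero f.denom_ne_zero)] at hf
    rwa [map_mul]
  have hderiv : ((derivative f.num * f.denom - f.num * derivative f.denom : ℚ[X]) : ℚ⟦X⟧)
      = d⁄dX ℚ φ * ((f.denom ^ 2 : ℚ[X]) : ℚ⟦X⟧) := by
    push_cast
    rw [← PowerSeries.derivative_coe, ← PowerSeries.derivative_coe, hnum, Derivation.leibniz,
      smul_eq_mul, smul_eq_mul]
    ring
  rw [ratDeriv, RatFunc.mk_eq_div, map_div₀, coe_algebraMap_polynomial,
    coe_algebraMap_polynomial, hderiv, map_mul,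
    mul_div_cancel_right₀ _ (coe_polynomial_ne_zero (pow_ne_zero 2 f.denom_ne_zero))]

theorem coe_one_sub_smul_X_ne_zero {F : Type*} [Field F] (c : F) :
    ((1 - c • PowerSeries.X : F⟦X⟧) : F⸨X⸩) ≠ 0 := by
  refine (map_ne_zero_iff _ HahnSeries.ofPowerSeries_injective).mpr fun h => ?_
  simpa using congrArg PowerSeries.constantCoeff h

theorem coe_ratFunc_smul (c : ℚ) (f : RatFunc ℚ) :
    ((c • f : RatFunc ℚ) : ℚ⸨X⸩) = c • (f : ℚ⸨X⸩) := by
  rw [RatFunc.smul_eq_C_mul, map_mul, ← RatFunc.algebraMap_C, coe_algebraMap_polynomial,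
    Polynomial.coe_C, PowerSeries.coe_C, HahnSeries.C_mul_eq_smul]

theorem coe_X_mul_ratFunc {F : Type*} [Field F] {f : RatFunc F} {φ : F⟦X⟧}
    (hf : (f : F⸨X⸩) = φ) :
    ((RatFunc.X * f : RatFunc F) : F⸨X⸩) = ((PowerSeries.X * φ : F⟦X⟧) : F⸨X⸩) := by
  rw [map_mul, hf, RatFunc.coe_X, PowerSeries.coe_mul, PowerSeries.coe_X]

theorem coe_X_mul_ratDeriv {f : RatFunc ℚ} {φ : ℚ⟦X⟧} (hf : (f : ℚ⸨X⸩) = φ) :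
    ((RatFunc.X * ratDeriv f : RatFunc ℚ) : ℚ⸨X⸩)
      = ((PowerSeries.X * d⁄dX ℚ φ : ℚ⟦X⟧) : ℚ⸨X⸩) :=
  coe_X_mul_ratFunc (coe_ratDeriv hf)

/-- `T_c = θ - c - ¼ θ² X` with `θ = X d/dX`. -/
noncomputable def recursionOp (c : ℚ) (φ : ℚ⟦X⟧) : ℚ⟦X⟧ :=
  PowerSeries.X * d⁄dX ℚ φ - c • φ
    - (1/4 : ℚ) • (PowerSeries.X * d⁄dX ℚ (PowerSeries.X * d⁄dX ℚ (PowerSeries.X * φ)))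

theorem coeff_recursionOp (c : ℚ) (φ : ℚ⟦X⟧) (n : ℕ) :
    PowerSeries.coeff n (recursionOp c φ)
      = (n - c) * PowerSeries.coeff n φ
        - 1/4 * n ^ 2 * PowerSeries.coeff n (PowerSeries.X * φ) := by
  simp only [recursionOp, map_sub, PowerSeries.coeff_smul, PowerSeries.coeff_X_mul_derivative,
    smul_eq_mul]
  ring

theorem coe_one_sub_smul_X_mul_of_rec {c : ℚ} {f g : RatFunc ℚ} {φ : ℚ⟦X⟧}
    (hg : (g : ℚ⸨X⸩) = φ)
    (hfg : f / RatFunc.X - c • f + (c - 1) • g - RatFunc.X * ratDeriv g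
      + (1/4 : ℚ) • (RatFunc.X * ratDeriv (RatFunc.X * ratDeriv (RatFunc.X * g))) = 0) :
    ((1 - c • PowerSeries.X : ℚ⟦X⟧) : ℚ⸨X⸩) * f
      = ((PowerSeries.X * recursionOp (c - 1) φ : ℚ⟦X⟧) : ℚ⸨X⸩) := by
  have hfg := congrArg (fun r : RatFunc ℚ => (r : ℚ⸨X⸩)) hfg
  simp only [map_add, map_sub, map_div₀, coe_ratFunc_smul, RatFunc.coe_X, map_zero] at hfg
  rw [hg, coe_X_mul_ratDeriv hg,
    coe_X_mul_ratDeriv (coe_X_mul_ratDeriv (coe_X_mul_ratFunc hg))] at hfg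
  rw [recursionOp, PowerSeries.coe_mul, map_sub, map_sub, map_sub, map_one, PowerSeries.coe_smul,
    PowerSeries.coe_smul, PowerSeries.coe_smul, PowerSeries.coe_X]
  have hs : (HahnSeries.single 1 1 : ℚ⸨X⸩) * (HahnSeries.single 1 1)⁻¹ = 1 :=
    mul_inv_cancel₀ (by simp)
  simp only [← HahnSeries.C_mul_eq_smul, map_sub, map_one] at hfg ⊢
  linear_combination (HahnSeries.single 1 1 : ℚ⸨X⸩) * hfg - (f : ℚ⸨X⸩) * hs

theorem coeff_zero_of_rec {q r s : ℚ[X]} {n : ℕ}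
    (h : (((n : ℚ) + 1) ^ 2) • r + (X ^ 2 - X) * derivative q - (n : ℚ) • (X * q)
      + (1/4 : ℚ) • (X * s) = 0) :
    r.coeff 0 = 0 := by
  have h0 := congrArg (coeff · 0) h
  simp only [coeff_add, coeff_sub, coeff_smul, sq, mul_assoc, coeff_X_mul_zero, sub_mul,
    smul_eq_mul] at h0
  simpa only [sub_self, add_zero, mul_zero, sub_zero, coeff_zero, mul_eq_zero, pow_eq_zero_iff,
    Nat.cast_add_one_ne_zero, false_or] using h0

theorem coeff_succ_of_rec {q r s : ℚ[X]} {a : ℚ}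
    (h : ((a + 1) ^ 2) • r + (X ^ 2 - X) * derivative q - a • (X * q)
      + (1/4 : ℚ) • (X * s) = 0) (k : ℕ) :
    (a + 1) ^ 2 * r.coeff (k + 1)
      = (k + 1) * q.coeff (k + 1) + (a - k) * q.coeff k - 1/4 * s.coeff k := by
  have hk := congrArg (coeff · (k + 1)) h
  simp only [coeff_add, coeff_sub, coeff_smul, sq X, mul_assoc, sub_mul, smul_eq_mul,
    coeff_X_mul_derivative] at hk
  simp only [coeff_X_mul, coeff_X_mul_derivative, coeff_zero, Nat.cast_add_one] at hk
  linear_combination hk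

def SatisfiesPRecursion (p : ℕ → ℚ[X]) : Prop :=
  ∀ n : ℕ, (((n : ℚ) + 1) ^ 2) • p (n + 1) + (X ^ 2 - X) * derivative (p n)
    - (n : ℚ) • (X * p n) + (1/4 : ℚ) • (X * (if n = 0 then 0 else p (n - 1))) = 0

noncomputable def coeffSeries (p : ℕ → ℚ[X]) (m : ℕ) : ℚ⟦X⟧ :=
  PowerSeries.mk fun n => (n.factorial : ℚ) ^ 2 * (p n).coeff m

section coeffSeries

variable {p : ℕ → ℚ[X]}

theorem coeffSeries_zero (hp0 : p 0 = 1) (hprec : SatisfiesPRecursion p) :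
    coeffSeries p 0 = 1 := by
  ext (_ | n)
  · simp [coeffSeries, hp0]
  · simp [coeffSeries, coeff_zero_of_rec (hprec n)]

theorem one_sub_smul_X_mul_coeffSeries (hp0 : p 0 = 1) (hprec : SatisfiesPRecursion p) (k : ℕ) :
    (1 - ((k : ℚ) + 1) • PowerSeries.X) * coeffSeries p (k + 1)
      = PowerSeries.X * recursionOp k (coeffSeries p k) := by
  ext (_ | n)
  · simp [coeffSeries, hp0, Polynomial.coeff_one]
  · have hn := coeff_succ_of_rec (hprec n) k
    rw [sub_mul, one_mul, smul_mul_assoc, map_sub, PowerSeries.coeff_smul,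
      PowerSeries.coeff_succ_X_mul, PowerSeries.coeff_succ_X_mul, coeff_recursionOp]
    simp only [coeffSeries, PowerSeries.coeff_mk, smul_eq_mul]
    cases n with
    | zero =>
      simp only [Nat.factorial_zero, Nat.cast_one, Nat.cast_zero, ↓reduceIte,
        coeff_zero, PowerSeries.coeff_zero_X_mul] at hn ⊢
      linear_combination hn
    | succ j =>
      rw [PowerSeries.coeff_succ_X_mul, PowerSeries.coeff_mk]
      simp only [Nat.factorial_succ, add_tsub_cancel_right, Nat.add_one_ne_zero, if_false] at hn ⊢
      push_cast at hn ⊢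
      linear_combination (((j : ℚ) + 1) * j.factorial) ^ 2 * hn

end coeffSeries

theorem coe_h_eq_coeffSeries {h : ℕ → RatFunc ℚ} {p : ℕ → ℚ[X]} (h0 : h 0 = 1)
    (hrec : ∀ n : ℕ, 1 ≤ n →
      h n / RatFunc.X - (n : ℚ) • h n + ((n : ℚ) - 1) • h (n - 1)
        - RatFunc.X * ratDeriv (h (n - 1))
        + (1/4 : ℚ) •
          (RatFunc.X * ratDeriv (RatFunc.X * ratDeriv (RatFunc.X * h (n - 1)))) = 0)
    (hp0 : p 0 = 1) (hprec : SatisfiesPRecursion p) (m : ℕ) :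
    (h m : ℚ⸨X⸩) = coeffSeries p m := by
  induction m with
  | zero => rw [h0, coeffSeries_zero hp0 hprec, map_one, map_one]
  | succ k ih =>
    have hk := coe_one_sub_smul_X_mul_of_rec (c := ((k + 1 : ℕ) : ℚ)) ih
      (hrec (k + 1) k.succ_pos)
    rw [Nat.cast_add_one, add_sub_cancel_right] at hk
    refine mul_left_cancel₀ (coe_one_sub_smul_X_ne_zero ((k : ℚ) + 1)) ?_
    rw [hk, ← PowerSeries.coe_mul, one_sub_smul_X_mul_coeffSeries hp0 hprec]

/-- For all `m, i ≥ 0`: the rational function `h m` is regular at `v = 0` (its Laurent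
expansion at `0` has no negative-index coefficients) and its `i`-th Taylor coefficient at
`v = 0` equals `(i!)²` times the coefficient of `u^m` in `p i`; i.e. the identity
`∑_{n≥0} (n!)² pₙ(u) vⁿ = ∑_{m≥0} h_m(v) u^m` holds coefficientwise. -/
theorem h_taylor_coeff_eq_p_coeff
    (h : ℕ → RatFunc ℚ)
    (h0 : h 0 = 1)
    (hrec : ∀ n : ℕ, 1 ≤ n →
      h n / RatFunc.X - (n : ℚ) • h n + ((n : ℚ) - 1) • h (n - 1)
        - RatFunc.X * ratDeriv (h (n - 1))
        + (1/4 : ℚ) •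
          (RatFunc.X * ratDeriv (RatFunc.X * ratDeriv (RatFunc.X * h (n - 1)))) = 0)
    (p : ℕ → Polynomial ℚ)
    (hp0 : p 0 = 1)
    (hprec : ∀ n : ℕ,
      (((n : ℚ) + 1) ^ 2) • p (n + 1) + (X ^ 2 - X) * Polynomial.derivative (p n)
        - (n : ℚ) • (X * p n)
        + (1/4 : ℚ) • (X * (if n = 0 then 0 else p (n - 1))) = 0)
    (m : ℕ) :
    (∀ i : ℤ, i < 0 → ((h m : LaurentSeries ℚ)).coeff i = 0) ∧
    (∀ i : ℕ, ((h m : LaurentSeries ℚ)).coeff (i : ℤ)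
        = ((Nat.factorial i : ℚ)) ^ 2 * (p i).coeff m) := by
  have hm := coe_h_eq_coeffSeries h0 hrec hp0 hprec m
  refine ⟨fun i hi => ?_, fun i => ?_⟩
  · rw [hm, PowerSeries.coeff_coe, if_pos hi]
  · rw [hm, LaurentSeries.coeff_coe_powerSeries, coeffSeries, PowerSeries.coeff_mk]
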